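/- arXiv:1910.11759 — 2 statements merged into one kernel-verified Lean document; each statement's English description precedes it below -/
import Mathlib

section
/- Let V be a finite-dimensional vector space over a field K and T : V → V a linear operator such that V is generated (as a K-vector space) by the orbit {x, Tx, T²x, ...} of a single vector x. Then every T-invariant subspace W of V is also generated by the T-orbit of a single vector; in fact, if W is spanned by vectors p₁(T)x, ..., pₙ(T)x for polynomials p₁,...,pₙ ∈ K[X] and d = gcd(p₁,...,pₙ), then W = {q(T)(d(T)x) : q ∈ K[X]}. -/
/-!
Every `T`-invariant subspace is a module over `K[X]` through `q ↦ q(T)`. By Bézout,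
`d = ∑ gᵢ pᵢ`, so `d(T) x = ∑ gᵢ(T) pᵢ(T) x ∈ W` and hence all `q(T) d(T) x` lie in `W`;
conversely each generator `pᵢ(T) x` is of this form because `d ∣ pᵢ`.
-/

open Polynomial

namespace Module.End

variable {R M : Type*} [CommSemiring R] [AddCommMonoid M] [Module R M]

/-- `{q(T) y | q ∈ R[X]}`, the `T`-cyclic submodule generated by `y`. -/
noncomputable def cyclicSubmodule (T : Module.End R M) (y : M) : Submodule R M :=
  LinearMap.range ((LinearMap.applyₗ y).comp (aeval T).toLinearMap)

theorem mem_cyclicSubmodule {T : Module.End R M} {y v : M} :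
    v ∈ T.cyclicSubmodule y ↔ ∃ q : R[X], aeval T q y = v :=
  Iff.rfl

theorem cyclicSubmodule_le {T : Module.End R M} {W : Submodule R M} (hW : W ≤ W.comap T) {y : M}
    (hy : y ∈ W) : T.cyclicSubmodule y ≤ W := by
  rintro _ ⟨q, rfl⟩
  exact aeval_apply_smul_mem_of_le_comap hy q T hW

theorem aeval_mem_cyclicSubmodule_of_dvd (T : Module.End R M) (x : M) {d p : R[X]} (h : d ∣ p) :
    aeval T p x ∈ T.cyclicSubmodule (aeval T d x) := by
  obtain ⟨c, rfl⟩ := h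
  exact mem_cyclicSubmodule.2 ⟨c, by rw [mul_comm, map_mul, mul_apply]⟩

end Module.End

theorem aeval_finset_gcd_mem {K V ι : Type*} [Field K] [DecidableEq K] [AddCommGroup V]
    [Module K V] {T : Module.End K V} {W : Submodule K V} (hW : W ≤ W.comap T) {x : V}
    (s : Finset ι) (p : ι → K[X]) (hp : ∀ i ∈ s, aeval T (p i) x ∈ W) :
    aeval T (s.gcd p) x ∈ W := by
  obtain ⟨g, hg⟩ := s.gcd_eq_sum_mul p
  rw [hg, map_sum, LinearMap.sum_apply]
  refine W.sum_mem fun i hi => ?_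
  rw [mul_comm, map_mul, Module.End.mul_apply]
  exact aeval_apply_smul_mem_of_le_comap (hp i hi) _ T hW

theorem stmt0_general {K V : Type*} [Field K] [DecidableEq K] [AddCommGroup V] [Module K V]
    (T : Module.End K V) (x : V)
    (W : Submodule K V) (hW : ∀ w ∈ W, T w ∈ W)
    (n : ℕ) (p : Fin n → Polynomial K)
    (hspan : W = Submodule.span K (Set.range fun i => Polynomial.aeval T (p i) x))
    (d : Polynomial K) (hd : d = Finset.univ.gcd p) :
    (W : Set V) =
      {v | ∃ q : Polynomial K, v = Polynomial.aeval T q (Polynomial.aeval T d x)} := by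
  suffices W = T.cyclicSubmodule (aeval T d x) by
    ext v
    simp only [this, SetLike.mem_coe, Module.End.mem_cyclicSubmodule, Set.mem_ofPred_eq, eq_comm]
  refine le_antisymm ?_ (Module.End.cyclicSubmodule_le hW ?_)
  · rw [hspan, Submodule.span_le]
    rintro _ ⟨i, rfl⟩
    exact T.aeval_mem_cyclicSubmodule_of_dvd x (hd ▸ Finset.gcd_dvd (Finset.mem_univ i))
  · exact hd ▸ aeval_finset_gcd_mem hW Finset.univ p fun i _ => hspan ▸ Submodule.subset_span ⟨i, rfl⟩

theorem stmt0 {K V : Type*} [Field K] [DecidableEq K] [AddCommGroup V] [Module K V]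
    [FiniteDimensional K V] (T : Module.End K V) (x : V)
    (hcyc : Submodule.span K (Set.range fun m : ℕ => (T ^ m) x) = ⊤)
    (W : Submodule K V) (hW : ∀ w ∈ W, T w ∈ W)
    (n : ℕ) (p : Fin n → Polynomial K)
    (hspan : W = Submodule.span K (Set.range fun i => Polynomial.aeval T (p i) x))
    (d : Polynomial K) (hd : d = Finset.univ.gcd p) :
    (W : Set V) =
      {v | ∃ q : Polynomial K, v = Polynomial.aeval T q (Polynomial.aeval T d x)} :=
  stmt0_general T x W hW n p hspan d hd
end

section
/- Let V be a finite-dimensional vector space over a field K and T : V → V a linear operator whose minimal polynomial is f^n for an irreducible polynomial f ∈ K[X], and suppose V is T-cyclic (spanned by the T-orbit of one vector). Then the T-invariant subspaces of V are exactly the subspaces ker(f(T)^k) for k ∈ {0, 1, ..., n}; in particular the lattice of T-invariant subspaces is a chain with n+1 elements. -/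
/-!
Sending `p ↦ p(T) v` identifies `V` with `K[X] ⧸ (f ^ n)`. For an invariant subspace `W`, the
`T`-conductor `{p | p(T) v ∈ W}` is an ideal containing `f ^ n`, hence equal to `(f ^ k)` for some
`k ≤ n`, and then `W = ker f(T) ^ (n - k)`. These kernels are pairwise distinct for `k ≤ n`, since
`f(T) ^ (n - j) v` lies in `ker f(T) ^ i` exactly when `j ≤ i`.
-/

open Polynomial

section Cyclic

variable {R M : Type*} [CommRing R] [AddCommGroup M] [Module R M] {T : Module.End R M} {v : M}

lemma exists_aeval_apply_eq_of_span_pow_eq_top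
    (hv : Submodule.span R (Set.range fun m : ℕ => (T ^ m) v) = ⊤) (x : M) :
    ∃ p : R[X], aeval T p v = x := by
  have hx : x ∈ Submodule.span R (Set.range fun m : ℕ => (T ^ m) v) := hv ▸ Submodule.mem_top
  induction hx using Submodule.span_induction with
  | mem x hx =>
    obtain ⟨m, rfl⟩ := hx
    exact ⟨X ^ m, by simp⟩
  | zero => exact ⟨0, by simp⟩
  | add x y _ _ hx hy =>
    obtain ⟨p, rfl⟩ := hx
    obtain ⟨q, rfl⟩ := hy
    exact ⟨p + q, by simp⟩
  | smul a x _ hx =>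
    obtain ⟨p, rfl⟩ := hx
    exact ⟨a • p, by simp⟩

lemma aeval_apply_eq_zero_iff_of_span_pow_eq_top
    (hv : Submodule.span R (Set.range fun m : ℕ => (T ^ m) v) = ⊤) (p : R[X]) :
    aeval T p v = 0 ↔ aeval T p = 0 := by
  refine ⟨fun hp => LinearMap.ext fun x => ?_, fun hp => by rw [hp, LinearMap.zero_apply]⟩
  obtain ⟨q, rfl⟩ := exists_aeval_apply_eq_of_span_pow_eq_top hv x
  rw [← Module.End.mul_apply, ← map_mul, mul_comm, map_mul, Module.End.mul_apply, hp, map_zero,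
    LinearMap.zero_apply]

lemma ker_aeval_mem_invtSubmodule (p : R[X]) : LinearMap.ker (aeval T p) ∈ T.invtSubmodule := by
  have hcomm : Commute T (aeval T p) := by simpa using (Commute.all X p).map (aeval T)
  intro x hx
  rw [LinearMap.mem_ker] at hx
  rw [Submodule.mem_comap, LinearMap.mem_ker, ← Module.End.mul_apply, ← hcomm.eq,
    Module.End.mul_apply, hx, map_zero]

lemma ker_aeval_le_ker_aeval_of_dvd {p q : R[X]} (h : p ∣ q) :
    LinearMap.ker (aeval T p) ≤ LinearMap.ker (aeval T q) := by
  obtain ⟨r, rfl⟩ := h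
  rw [mul_comm, map_mul, Module.End.mul_eq_comp]
  exact LinearMap.ker_le_ker_comp _ _

/-- The `T`-conductor of `v` into `W`, in the terminology of Hoffman–Kunze. -/
def tConductor (T : Module.End R M) (v : M) {W : Submodule R M} (hW : W ∈ T.invtSubmodule) :
    Ideal R[X] where
  carrier := {p | aeval T p v ∈ W}
  add_mem' {p q} hp hq := by
    simp only [Set.mem_ofPred_eq, map_add, LinearMap.add_apply] at hp hq ⊢
    exact W.add_mem hp hq
  zero_mem' := by simp
  smul_mem' q p hp := by
    simp only [Set.mem_ofPred_eq, smul_eq_mul, map_mul, Module.End.mul_apply] at hp ⊢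
    exact aeval_apply_smul_mem_of_le_comap hp q T hW

@[simp]
lemma mem_tConductor {W : Submodule R M} (hW : W ∈ T.invtSubmodule) {p : R[X]} :
    p ∈ tConductor T v hW ↔ aeval T p v ∈ W :=
  Iff.rfl

end Cyclic

lemma Ideal.exists_eq_span_pow_of_pow_mem {R : Type*} [CommRing R] [IsDomain R]
    [IsPrincipalIdealRing R] {f : R} (hf : Prime f) {n : ℕ} {I : Ideal R} (hI : f ^ n ∈ I) :
    ∃ k ≤ n, I = Ideal.span {f ^ k} := by
  have hdvd : Submodule.IsPrincipal.generator I ∣ f ^ n :=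
    (Submodule.IsPrincipal.mem_iff_generator_dvd I).mp hI
  obtain ⟨k, hk, hassoc⟩ := (dvd_prime_pow hf n).mp hdvd
  refine ⟨k, hk, ?_⟩
  rw [← Ideal.span_singleton_generator I, Ideal.span_singleton_eq_span_singleton.mpr hassoc]

section PrimaryCyclic

variable {K V : Type*} [Field K] [AddCommGroup V] [Module K V] {T : Module.End K V} {v : V}
  (hv : Submodule.span K (Set.range fun m : ℕ => (T ^ m) v) = ⊤)
include hv

lemma aeval_apply_mem_ker_aeval_iff (p q : K[X]) :
    aeval T p v ∈ LinearMap.ker (aeval T q) ↔ minpoly K T ∣ q * p := by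
  rw [LinearMap.mem_ker, ← Module.End.mul_apply, ← map_mul,
    aeval_apply_eq_zero_iff_of_span_pow_eq_top hv, minpoly.dvd_iff]

variable {f : K[X]} {n : ℕ} (hf : Irreducible f) (hmin : minpoly K T = f ^ n)
include hf hmin

lemma eq_ker_aeval_pow_of_mem_invtSubmodule {W : Submodule K V} (hW : W ∈ T.invtSubmodule) :
    ∃ k ≤ n, W = LinearMap.ker (aeval T (f ^ k)) := by
  have hfn : f ^ n ∈ tConductor T v hW := by
    rw [mem_tConductor, ← hmin, minpoly.aeval, LinearMap.zero_apply]
    exact W.zero_mem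
  obtain ⟨k, hk, hI⟩ := Ideal.exists_eq_span_pow_of_pow_mem hf.prime hfn
  refine ⟨n - k, Nat.sub_le n k, Submodule.ext fun x => ?_⟩
  obtain ⟨p, rfl⟩ := exists_aeval_apply_eq_of_span_pow_eq_top hv x
  rw [← mem_tConductor hW, hI, Ideal.mem_span_singleton, aeval_apply_mem_ker_aeval_iff hv, hmin,
    ← mul_dvd_mul_iff_left (pow_ne_zero (n - k) hf.ne_zero), ← pow_add, Nat.sub_add_cancel hk]

lemma ker_aeval_pow_le_ker_aeval_pow_iff {i j : ℕ} (hi : i ≤ n) :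
    LinearMap.ker (aeval T (f ^ i)) ≤ LinearMap.ker (aeval T (f ^ j)) ↔ i ≤ j := by
  refine ⟨fun h => ?_, fun h => ker_aeval_le_ker_aeval_of_dvd (pow_dvd_pow f h)⟩
  have hmem (k : ℕ) : aeval T (f ^ (n - i)) v ∈ LinearMap.ker (aeval T (f ^ k)) ↔ i ≤ k := by
    rw [aeval_apply_mem_ker_aeval_iff hv, hmin, ← pow_add,
      pow_dvd_pow_iff hf.ne_zero hf.not_isUnit]
    omega
  exact (hmem j).mp (h ((hmem i).mpr le_rfl))

lemma invtSubmodule_eq_image_ker_aeval_pow :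
    (T.invtSubmodule : Set (Submodule K V)) =
      (fun k => LinearMap.ker (aeval T (f ^ k))) '' Set.Iic n := by
  ext W
  constructor
  · intro hW
    obtain ⟨k, hk, rfl⟩ := eq_ker_aeval_pow_of_mem_invtSubmodule hv hf hmin hW
    exact ⟨k, hk, rfl⟩
  · rintro ⟨k, -, rfl⟩
    exact ker_aeval_mem_invtSubmodule _

lemma injOn_ker_aeval_pow : Set.InjOn (fun k => LinearMap.ker (aeval T (f ^ k))) (Set.Iic n) :=
  fun _ hi _ hj hij => le_antisymm
    ((ker_aeval_pow_le_ker_aeval_pow_iff hv hf hmin hi).mp hij.le)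
    ((ker_aeval_pow_le_ker_aeval_pow_iff hv hf hmin hj).mp hij.ge)

end PrimaryCyclic

theorem stmt2_general {K V : Type*} [Field K] [AddCommGroup V] [Module K V]
    (T : Module.End K V)
    (f : Polynomial K) (n : ℕ) (hirr : Irreducible f)
    (hmin : minpoly K T = f ^ n)
    (v : V) (hcyc : Submodule.span K (Set.range fun m : ℕ => (T ^ m) v) = ⊤) :
    (∀ W : Submodule K V,
      (∀ w ∈ W, T w ∈ W) ↔
        ∃ k ≤ n, W = LinearMap.ker (Polynomial.aeval T f ^ k)) ∧
    IsChain (· ≤ ·) {W : Submodule K V | ∀ w ∈ W, T w ∈ W} ∧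
    Nat.card {W : Submodule K V // ∀ w ∈ W, T w ∈ W} = n + 1 := by
  have hinvt : {W : Submodule K V | ∀ w ∈ W, T w ∈ W} =
      (fun k => LinearMap.ker (aeval T (f ^ k))) '' Set.Iic n :=
    invtSubmodule_eq_image_ker_aeval_pow hcyc hirr hmin
  have hmono : Monotone fun k => LinearMap.ker (aeval T (f ^ k)) :=
    fun _ _ h => ker_aeval_le_ker_aeval_of_dvd (pow_dvd_pow f h)
  refine ⟨fun W => ?_, ?_, ?_⟩
  · simpa [← map_pow, eq_comm] using Set.ext_iff.mp hinvt W
  · exact hinvt ▸ hmono.isChain_range.mono (Set.image_subset_range _ _)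
  · change Nat.card {W : Submodule K V | ∀ w ∈ W, T w ∈ W} = n + 1
    rw [hinvt, Nat.card_image_of_injOn (injOn_ker_aeval_pow hcyc hirr hmin)]
    simp

theorem stmt2 {K V : Type*} [Field K] [AddCommGroup V] [Module K V]
    [FiniteDimensional K V] (T : Module.End K V)
    (f : Polynomial K) (n : ℕ) (hirr : Irreducible f)
    (hmin : minpoly K T = f ^ n)
    (v : V) (hcyc : Submodule.span K (Set.range fun m : ℕ => (T ^ m) v) = ⊤) :
    (∀ W : Submodule K V,
      (∀ w ∈ W, T w ∈ W) ↔
        ∃ k ≤ n, W = LinearMap.ker (Polynomial.aeval T f ^ k)) ∧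
    IsChain (· ≤ ·) {W : Submodule K V | ∀ w ∈ W, T w ∈ W} ∧
    Nat.card {W : Submodule K V // ∀ w ∈ W, T w ∈ W} = n + 1 :=
  stmt2_general T f n hirr hmin v hcyc
end
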